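/- Let N ≥ 1, 1 ≤ p < ∞ and 0 < λ ≤ N. For every measurable function f on ℝ^N with ‖f‖_{M^{p,λ}} < ∞ and every t > 0, ‖e^{tΔ}f‖_{M^{p,λ}} ≤ ‖f‖_{M^{p,λ}}. -/

import Mathlib

open MeasureTheory Real Set Metric
open scoped ENNReal NNReal

noncomputable section

/-- Euclidean space ℝ^N. -/
abbrev RN (N : ℕ) := EuclideanSpace ℝ (Fin N)

/-- The Gaussian heat kernel `G(t,x) = (4πt)^{-N/2} exp(-|x|²/(4t))` on ℝ^N. -/
def heatKernel (N : ℕ) (t : ℝ) (x : RN N) : ℝ :=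
  (4 * Real.pi * t) ^ (-(N : ℝ) / 2) * Real.exp (-‖x‖ ^ 2 / (4 * t))

/-- `(e^{tΔ}f)(x) = ∫_{ℝ^N} G(t, x-y) f(y) dy` for a measurable function `f`. -/
def heatConv (N : ℕ) (t : ℝ) (f : RN N → ℝ) (x : RN N) : ℝ :=
  ∫ y, heatKernel N t (x - y) * f y

/-- The uniformly local `L^p` norm: `‖f‖ = sup_z ‖f‖_{L^p(B(z,1))}`. -/
def ulocNorm (N : ℕ) (p : ℝ≥0∞) (f : RN N → ℝ) : ℝ≥0∞ :=
  ⨆ z : RN N, eLpNorm f p (volume.restrict (ball z 1))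

/-- The local Morrey norm:
`‖f‖_{M^{q,λ}} = sup_z sup_{0 < R ≤ 1} R^{(λ-N)/q} ‖f‖_{L^q(B(z,R))}`. -/
def morreyNorm (N : ℕ) (q lam : ℝ) (f : RN N → ℝ) : ℝ≥0∞ :=
  ⨆ (z : RN N) (R : ℝ) (_ : R ∈ Ioc (0 : ℝ) 1),
    ENNReal.ofReal (R ^ ((lam - N) / q)) *
      eLpNorm f (ENNReal.ofReal q) (volume.restrict (ball z R))

/-! ### Auxiliary lemmas -/

lemma heatKernel_nonneg (N : ℕ) {t : ℝ} (ht : 0 < t) (x : RN N) : 0 ≤ heatKernel N t x := by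
  unfold heatKernel
  positivity

lemma heatKernel_continuous (N : ℕ) (t : ℝ) : Continuous (heatKernel N t) := by
  unfold heatKernel
  fun_prop

lemma heatKernel_measurable (N : ℕ) (t : ℝ) : Measurable (heatKernel N t) :=
  (heatKernel_continuous N t).measurable

lemma integrable_heatKernel (N : ℕ) {t : ℝ} (ht : 0 < t) :
    Integrable (heatKernel N t) := by
  have hb : (0:ℝ) < 1/(4*t) := by positivity
  have h := (GaussianFourier.integrable_cexp_neg_mul_sq_norm_add
      (V := RN N) (b := ((1/(4*t) : ℝ) : ℂ)) (by simpa using hb) 0 0).norm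
  have h2 : Integrable (fun v : RN N => rexp (-(1/(4*t)) * ‖v‖^2)) := by
    convert h using 2 with v
    simp only [Complex.norm_exp]
    congr 1
    simp [← Complex.ofReal_pow, ← Complex.ofReal_mul, ← Complex.ofReal_neg]
  have h3 := h2.const_mul ((4 * Real.pi * t) ^ (-(N : ℝ) / 2))
  refine h3.congr (Filter.Eventually.of_forall fun x => ?_)
  unfold heatKernel
  ring_nf

lemma integral_heatKernel (N : ℕ) {t : ℝ} (ht : 0 < t) :
    ∫ x : RN N, heatKernel N t x = 1 := by
  have hb : (0:ℝ) < 1/(4*t) := by positivity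
  have h := GaussianFourier.integral_rexp_neg_mul_sq_norm (V := RN N) hb
  have hdim : (Module.finrank ℝ (RN N) : ℝ) = (N : ℝ) := by
    simp [finrank_euclideanSpace_fin]
  unfold heatKernel
  have hexp : ∀ x : RN N, rexp (-‖x‖^2 / (4*t)) = rexp (-(1/(4*t)) * ‖x‖^2) := by
    intro x; congr 1; ring
  simp_rw [hexp]
  rw [MeasureTheory.integral_const_mul, h, hdim]
  have hpi : π / (1/(4*t)) = 4 * π * t := by
    field_simp
  rw [hpi, ← Real.rpow_add (by positivity),
    show (-(N:ℝ)/2 + (N:ℝ)/2) = 0 by ring, Real.rpow_zero]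

lemma lintegral_heatKernel (N : ℕ) {t : ℝ} (ht : 0 < t) :
    ∫⁻ x : RN N, ENNReal.ofReal (heatKernel N t x) = 1 := by
  rw [← ofReal_integral_eq_lintegral_ofReal (integrable_heatKernel N ht)
      (Filter.Eventually.of_forall (heatKernel_nonneg N ht))]
  rw [integral_heatKernel N ht]
  simp

lemma lintegral_heatKernel_sub (N : ℕ) {t : ℝ} (ht : 0 < t) (x : RN N) :
    ∫⁻ y : RN N, ENNReal.ofReal (heatKernel N t (x - y)) = 1 := by
  have hmp := Measure.measurePreserving_sub_left (volume : Measure (RN N)) x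
  have := hmp.lintegral_comp
    (f := fun w => ENNReal.ofReal (heatKernel N t w))
    (ENNReal.measurable_ofReal.comp (heatKernel_measurable N t))
  rw [this]
  exact lintegral_heatKernel N ht

/-- Jensen-type inequality for probability densities. -/
lemma jensen_lintegral {α : Type*} [MeasurableSpace α] {μ : Measure α} {g F : α → ℝ≥0∞}
    (hg : AEMeasurable g μ) (hF : AEMeasurable F μ) (hg1 : ∫⁻ a, g a ∂μ = 1)
    {p : ℝ} (hp : 1 ≤ p) :
    (∫⁻ a, g a * F a ∂μ) ^ p ≤ ∫⁻ a, g a * F a ^ p ∂μ := by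
  rcases eq_or_lt_of_le hp with h1 | h1
  · rw [← h1, ENNReal.rpow_one]
    exact le_of_eq (lintegral_congr fun a => by rw [ENNReal.rpow_one])
  · set q := Real.conjExponent p with hq
    have hpq : q.HolderConjugate p := (Real.HolderConjugate.conjExponent h1).symm
    have hp0 : p ≠ 0 := by positivity
    have hq0 : q ≠ 0 := hpq.ne_zero
    have hq1 : (0:ℝ) ≤ 1/q := by rw [one_div]; exact hpq.inv_nonneg
    have hp1 : (0:ℝ) ≤ 1/p := by positivity
    have key : (fun a => g a * F a) =
        (fun a => g a ^ (1/q)) * fun a => g a ^ (1/p) * F a := by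
      funext a
      have : g a ^ (1/q) * (g a ^ (1/p) * F a) = (g a ^ (1/q) * g a ^ (1/p)) * F a := by ring
      show g a * F a = g a ^ (1/q) * (g a ^ (1/p) * F a)
      rw [this, ← ENNReal.rpow_add_of_nonneg _ _ hq1 hp1,
        show 1/q + 1/p = 1 by rw [one_div, one_div]; simpa using hpq.inv_add_inv_eq_inv,
        ENNReal.rpow_one]
    calc (∫⁻ a, g a * F a ∂μ) ^ p
        = (∫⁻ a, ((fun a => g a ^ (1/q)) * fun a => g a ^ (1/p) * F a) a ∂μ) ^ p := by
          rw [← key]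
      _ ≤ ((∫⁻ a, (g a ^ (1/q)) ^ q ∂μ) ^ (1/q) * (∫⁻ a, (g a ^ (1/p) * F a) ^ p ∂μ) ^ (1/p)) ^ p := by
          refine ENNReal.rpow_le_rpow ?_ (by positivity)
          exact ENNReal.lintegral_mul_le_Lp_mul_Lq μ hpq (hg.pow_const _)
            ((hg.pow_const _).mul hF)
      _ = ((∫⁻ a, g a ∂μ) ^ (1/q) * (∫⁻ a, g a * F a ^ p ∂μ) ^ (1/p)) ^ p := by
          congr 2
          · congr 1
            refine lintegral_congr fun a => ?_
            rw [← ENNReal.rpow_mul, one_div_mul_cancel hq0, ENNReal.rpow_one]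
          · congr 1
            refine lintegral_congr fun a => ?_
            rw [ENNReal.mul_rpow_of_nonneg _ _ (by positivity), ← ENNReal.rpow_mul,
              one_div_mul_cancel hp0, ENNReal.rpow_one]
      _ = ∫⁻ a, g a * F a ^ p ∂μ := by
          rw [hg1, ENNReal.one_rpow, one_mul, ← ENNReal.rpow_mul,
            one_div_mul_cancel hp0, ENNReal.rpow_one]

/-- the heat semigroup is a contraction on the local Morrey space `M^{p,λ}`. -/
theorem morrey_contraction
    (N : ℕ) (hN : 1 ≤ N) (p lam : ℝ) (hp : 1 ≤ p) (hlam0 : 0 < lam) (hlamN : lam ≤ N) :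
    ∀ f : RN N → ℝ, Measurable f → morreyNorm N p lam f < ∞ →
    ∀ t : ℝ, 0 < t →
      morreyNorm N p lam (heatConv N t f) ≤ morreyNorm N p lam f := by
  intro f hf hfM t ht
  set M := morreyNorm N p lam f with hM
  have hp0 : (0:ℝ) < p := lt_of_lt_of_le one_pos hp
  set P := ENNReal.ofReal p with hPdef
  have hPtop : P ≠ ∞ := ENNReal.ofReal_ne_top
  have hP0 : P ≠ 0 := by
    simp only [hPdef, ne_eq, ENNReal.ofReal_eq_zero, not_le]
    exact hp0
  have hPto : P.toReal = p := ENNReal.toReal_ofReal hp0.le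
  refine iSup_le fun z => iSup_le fun R => iSup_le fun hR => ?_
  obtain ⟨hR0, hR1⟩ := hR
  -- notation
  set G : RN N → ℝ≥0∞ := fun w => ENNReal.ofReal (heatKernel N t w) with hGdef
  have hGmeas : Measurable G := ENNReal.measurable_ofReal.comp (heatKernel_measurable N t)
  set F : RN N → ℝ≥0∞ := fun y => (‖f y‖₊ : ℝ≥0∞) with hFdef
  have hFmeas : Measurable F := hf.nnnorm.coe_nnreal_ennreal
  -- Step A : Morrey bound on any ball of radius R
  have hball : ∀ z' : RN N,
      ∫⁻ x in ball z' R, F x ^ p ≤ M ^ p * ENNReal.ofReal (R ^ ((N:ℝ) - lam)) := by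
    intro z'
    have hle : ENNReal.ofReal (R ^ ((lam - N) / p)) * eLpNorm f P (volume.restrict (ball z' R))
        ≤ M := by
      rw [hM, morreyNorm]
      refine le_iSup_of_le z' ?_
      refine le_iSup_of_le R ?_
      exact le_iSup (fun _ : R ∈ Ioc (0:ℝ) 1 =>
        ENNReal.ofReal (R ^ ((lam - N) / p)) *
          eLpNorm f (ENNReal.ofReal p) (volume.restrict (ball z' R))) ⟨hR0, hR1⟩
    set c := ENNReal.ofReal (R ^ ((lam - N) / p)) with hc
    have hcpos : 0 < R ^ ((lam - N) / p) := Real.rpow_pos_of_pos hR0 _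
    have hc0 : c ≠ 0 := by simp [hc, ENNReal.ofReal_eq_zero, not_le, hcpos]
    have hctop : c ≠ ∞ := ENNReal.ofReal_ne_top
    have hcinv : c⁻¹ = ENNReal.ofReal (R ^ (((N:ℝ) - lam) / p)) := by
      rw [hc, ← ENNReal.ofReal_inv_of_pos hcpos, ← Real.rpow_neg hR0.le]
      congr 1
      ring_nf
    have hE : eLpNorm f P (volume.restrict (ball z' R))
        ≤ ENNReal.ofReal (R ^ (((N:ℝ) - lam) / p)) * M := by
      rw [← hcinv]
      calc eLpNorm f P (volume.restrict (ball z' R))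
          = c⁻¹ * (c * eLpNorm f P (volume.restrict (ball z' R))) := by
            rw [← mul_assoc, ENNReal.inv_mul_cancel hc0 hctop, one_mul]
        _ ≤ c⁻¹ * M := mul_le_mul_right hle _
    have hEeq : eLpNorm f P (volume.restrict (ball z' R))
        = (∫⁻ x in ball z' R, F x ^ p) ^ (1/p) := by
      rw [eLpNorm_eq_lintegral_rpow_enorm_toReal hP0 hPtop, hPto]
      rfl
    have := ENNReal.rpow_le_rpow hE hp0.le
    rw [hEeq, ← ENNReal.rpow_mul, one_div_mul_cancel hp0.ne', ENNReal.rpow_one] at this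
    refine this.trans (le_of_eq ?_)
    rw [ENNReal.mul_rpow_of_nonneg _ _ hp0.le, mul_comm]
    congr 1
    rw [ENNReal.ofReal_rpow_of_pos (Real.rpow_pos_of_pos hR0 _),
      ← Real.rpow_mul hR0.le]
    congr 2
    field_simp
  -- Step B : pointwise Jensen bound
  have hpt : ∀ x : RN N, (‖heatConv N t f x‖₊ : ℝ≥0∞) ^ p
      ≤ ∫⁻ y, G (x - y) * F y ^ p := by
    intro x
    have h1 : (‖heatConv N t f x‖₊ : ℝ≥0∞) ≤ ∫⁻ y, G (x - y) * F y := by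
      refine (enorm_integral_le_lintegral_enorm _).trans (le_of_eq ?_)
      refine lintegral_congr fun y => ?_
      rw [enorm_mul]
      congr 1
      exact Real.enorm_eq_ofReal (heatKernel_nonneg N ht _)
    have hGx : Measurable fun y => G (x - y) :=
      hGmeas.comp (measurable_const.sub measurable_id)
    have h2 : (∫⁻ y, G (x - y) * F y) ^ p ≤ ∫⁻ y, G (x - y) * F y ^ p :=
      jensen_lintegral hGx.aemeasurable hFmeas.aemeasurable
        (lintegral_heatKernel_sub N ht x) hp
    exact (ENNReal.rpow_le_rpow h1 hp0.le).trans h2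
  -- Step C : integrate over the ball and swap
  have hmain : ∫⁻ x in ball z R, (‖heatConv N t f x‖₊ : ℝ≥0∞) ^ p
      ≤ M ^ p * ENNReal.ofReal (R ^ ((N:ℝ) - lam)) := by
    have step1 : ∫⁻ x in ball z R, (‖heatConv N t f x‖₊ : ℝ≥0∞) ^ p
        ≤ ∫⁻ x in ball z R, ∫⁻ y, G (x - y) * F y ^ p :=
      lintegral_mono fun x => hpt x
    have step2 : ∀ x : RN N, ∫⁻ y, G (x - y) * F y ^ p = ∫⁻ w, G w * F (x - w) ^ p := by
      intro x
      have hmp := Measure.measurePreserving_sub_left (volume : Measure (RN N)) x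
      have hφ : Measurable fun w => G w * F (x - w) ^ p :=
        (hGmeas.mul ((hFmeas.comp (measurable_const.sub measurable_id)).pow_const _))
      have := hmp.lintegral_comp (f := fun w => G w * F (x - w) ^ p) hφ
      rw [← this]
      refine lintegral_congr fun y => ?_
      simp
    have step3 : ∫⁻ x in ball z R, ∫⁻ y, G (x - y) * F y ^ p
        = ∫⁻ w, G w * ∫⁻ x in ball z R, F (x - w) ^ p := by
      simp_rw [step2]
      rw [lintegral_lintegral_swap]
      · refine lintegral_congr fun w => ?_
        exact lintegral_const_mul _ ((hFmeas.comp (measurable_id.sub measurable_const)).pow_const _)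
      · refine (Measurable.aemeasurable ?_)
        exact (hGmeas.comp measurable_snd).mul
          ((hFmeas.comp (measurable_fst.sub measurable_snd)).pow_const _)
    have step4 : ∀ w : RN N, ∫⁻ x in ball z R, F (x - w) ^ p
        = ∫⁻ x in ball (z - w) R, F x ^ p := by
      intro w
      have hmp := measurePreserving_sub_right (volume : Measure (RN N)) w
      have hemb : MeasurableEmbedding (fun x : RN N => x - w) :=
        (MeasurableEquiv.subRight w).measurableEmbedding
      have hpre : (fun x : RN N => x - w) ⁻¹' ball (z - w) R = ball z R := by
        ext x
        simp [mem_ball, dist_sub_right]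
      have := hmp.setLIntegral_comp_preimage_emb hemb
        (fun y => F y ^ p) (ball (z - w) R)
      rw [hpre] at this
      exact this
    calc ∫⁻ x in ball z R, (‖heatConv N t f x‖₊ : ℝ≥0∞) ^ p
        ≤ ∫⁻ w, G w * ∫⁻ x in ball z R, F (x - w) ^ p := step1.trans (le_of_eq step3)
      _ ≤ ∫⁻ w, G w * (M ^ p * ENNReal.ofReal (R ^ ((N:ℝ) - lam))) := by
          refine lintegral_mono fun w => ?_
          refine mul_le_mul_right ?_ _
          rw [step4 w]
          exact hball (z - w)
      _ = (∫⁻ w, G w) * (M ^ p * ENNReal.ofReal (R ^ ((N:ℝ) - lam))) :=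
          lintegral_mul_const _ hGmeas
      _ = M ^ p * ENNReal.ofReal (R ^ ((N:ℝ) - lam)) := by
          rw [show ∫⁻ w, G w = 1 from lintegral_heatKernel N ht, one_mul]
  -- conclude
  have hfinal : eLpNorm (heatConv N t f) P (volume.restrict (ball z R))
      ≤ M * ENNReal.ofReal (R ^ (((N:ℝ) - lam) / p)) := by
    rw [eLpNorm_eq_lintegral_rpow_enorm_toReal hP0 hPtop, hPto]
    calc (∫⁻ x in ball z R, (‖heatConv N t f x‖₊ : ℝ≥0∞) ^ p) ^ (1/p)
        ≤ (M ^ p * ENNReal.ofReal (R ^ ((N:ℝ) - lam))) ^ (1/p) :=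
          ENNReal.rpow_le_rpow hmain (by positivity)
      _ = M * ENNReal.ofReal (R ^ (((N:ℝ) - lam) / p)) := by
          rw [ENNReal.mul_rpow_of_nonneg _ _ (by positivity), ← ENNReal.rpow_mul,
            mul_one_div_cancel hp0.ne', ENNReal.rpow_one]
          congr 1
          rw [ENNReal.ofReal_rpow_of_pos (Real.rpow_pos_of_pos hR0 _),
            ← Real.rpow_mul hR0.le]
          congr 2
          field_simp
  calc ENNReal.ofReal (R ^ ((lam - (N:ℝ)) / p)) *
        eLpNorm (heatConv N t f) P (volume.restrict (ball z R))
      ≤ ENNReal.ofReal (R ^ ((lam - (N:ℝ)) / p)) *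
        (M * ENNReal.ofReal (R ^ (((N:ℝ) - lam) / p))) := mul_le_mul_right hfinal _
    _ = M * (ENNReal.ofReal (R ^ ((lam - (N:ℝ)) / p)) *
        ENNReal.ofReal (R ^ (((N:ℝ) - lam) / p))) := by ring
    _ = M := by
        rw [← ENNReal.ofReal_mul (Real.rpow_pos_of_pos hR0 _).le,
          ← Real.rpow_add hR0]
        have : (lam - (N:ℝ)) / p + ((N:ℝ) - lam) / p = 0 := by ring
        rw [this, Real.rpow_zero, ENNReal.ofReal_one, mul_one]
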